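/- Let γ ≥ 1 and R⁻ > 0, and for ε ∈ (0, R⁻) define A(ε) = ((R⁻ − ε)R⁻/√(2R⁻ − ε)) · √(2(h(R⁻) − h(R⁻ − ε))/ε). Then A(ε) = R⁻·c_s(R⁻) − ((γ + 1)/4)·c_s(R⁻)·ε + O(ε²) as ε → 0⁺; that is, the function ε ↦ A(ε) − R⁻c_s(R⁻) + ((γ + 1)/4)c_s(R⁻)ε is O(ε²) as ε → 0 from the right. -/

import Mathlib

open Real Filter Asymptotics

/-- The enthalpy: `h(ρ) = γ/(γ-1)·ρ^(γ-1)` for `γ > 1` and `h(ρ) = log ρ` for `γ = 1`. -/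
noncomputable def enth (γ ρ : ℝ) : ℝ :=
  if γ = 1 then Real.log ρ else γ / (γ - 1) * ρ ^ (γ - 1)

/-- The sound speed `c_s(ρ) = √(γ ρ^(γ-1))`. -/
noncomputable def soundSpeed (γ ρ : ℝ) : ℝ := Real.sqrt (γ * ρ ^ (γ - 1))

/-- The mass flux `A(ε)` of a shock of amplitude `ε` with left state `Rm`. -/
noncomputable def Aflux (γ Rm ε : ℝ) : ℝ :=
  ((Rm - ε) * Rm / Real.sqrt (2 * Rm - ε)) *
    Real.sqrt (2 * (enth γ Rm - enth γ (Rm - ε)) / ε)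

/-!
Squaring removes both square roots: `A(ε)² = (R⁻-ε)²R⁻²/(2R⁻-ε) · 2(h(R⁻) - h(R⁻-ε))/ε`, and the
difference quotient of the analytic function `h` at `R⁻` (a `dslope`) is analytic at `ε = 0`, with
value `h'(R⁻)` and slope `-h''(R⁻)/2` there. Hence `A = √(A²)` is analytic at `0` and the claimed
expansion is its first-order Taylor polynomial; `A(0) = R⁻c_s` and `A'(0) = -(γ+1)c_s/4` follow from
`h'(ρ) = γρ^(γ-2)` and `h''(ρ) = γ(γ-2)ρ^(γ-3)`.
-/

open Topology

section Dslope

variable {𝕜 E : Type*} [NontriviallyNormedField 𝕜] [NormedAddCommGroup E] [NormedSpace 𝕜 E]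
  {f : 𝕜 → E} {a : 𝕜}

theorem AnalyticAt.analyticAt_dslope (hf : AnalyticAt 𝕜 f a) : AnalyticAt 𝕜 (dslope f a) a :=
  let ⟨_, hp⟩ := hf
  hp.has_fpower_series_dslope_fslope.analyticAt

theorem sub_sub_smul_deriv_eq_sq_smul_dslope_dslope (x : 𝕜) :
    f x - f a - (x - a) • deriv f a = (x - a) ^ 2 • dslope (dslope f a) a x := by
  rw [sq, mul_smul, sub_smul_dslope, smul_sub, sub_smul_dslope, dslope_same]

theorem DifferentiableAt.isBigO_sub_sub_smul_deriv (hf : DifferentiableAt 𝕜 (dslope f a) a) :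
    (fun x => f x - f a - (x - a) • deriv f a) =O[𝓝 a] fun x => (x - a) ^ 2 := by
  have hbdd : dslope (dslope f a) a =O[𝓝 a] fun _ => (1 : 𝕜) :=
    (continuousAt_dslope_same.2 hf).tendsto.isBigO_one 𝕜
  refine ((isBigO_refl (fun x => (x - a) ^ 2) _).smul hbdd).congr (fun x => ?_) fun x => ?_
  · exact (sub_sub_smul_deriv_eq_sq_smul_dslope_dslope x).symm
  · exact mul_one _

theorem AnalyticAt.deriv_dslope_same [CompleteSpace 𝕜] [CharZero 𝕜] {g : 𝕜 → 𝕜}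
    (hg : AnalyticAt 𝕜 g a) : deriv (_root_.dslope g a) a = deriv (deriv g) a / 2 := by
  rw [hg.hasFPowerSeriesAt.has_fpower_series_dslope_fslope.deriv]
  simp [FormalMultilinearSeries.coeff_fslope, iteratedDeriv_succ]

end Dslope

theorem Real.analyticAt_rpow_const {x : ℝ} (hx : 0 < x) (p : ℝ) :
    AnalyticAt ℝ (fun y => y ^ p) x :=
  (((analyticAt_log hx).fun_mul (analyticAt_const (v := p))).rexp').congr <| by
    filter_upwards [Ioi_mem_nhds hx] with y hy
    rw [rpow_def_of_pos hy]

theorem Real.analyticAt_sqrt {x : ℝ} (hx : 0 < x) : AnalyticAt ℝ (√·) x :=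
  (analyticAt_rpow_const hx _).congr <| .of_forall fun y => (sqrt_eq_rpow y).symm

section Enthalpy

variable {γ ρ : ℝ}

theorem enth_one : enth 1 = log :=
  funext fun _ => if_pos rfl

theorem enth_of_ne_one (hγ : γ ≠ 1) : enth γ = fun ρ => γ / (γ - 1) * ρ ^ (γ - 1) :=
  funext fun _ => if_neg hγ

theorem analyticAt_enth (γ : ℝ) (hρ : 0 < ρ) : AnalyticAt ℝ (enth γ) ρ := by
  obtain rfl | hγ := eq_or_ne γ 1
  · exact enth_one ▸ analyticAt_log hρ
  · exact enth_of_ne_one hγ ▸ analyticAt_const.mul (analyticAt_rpow_const hρ _)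

theorem hasDerivAt_enth (γ : ℝ) (hρ : 0 < ρ) : HasDerivAt (enth γ) (γ * ρ ^ (γ - 2)) ρ := by
  obtain rfl | hγ := eq_or_ne γ 1
  · rw [enth_one]
    convert hasDerivAt_log hρ.ne' using 1
    norm_num [rpow_neg_one]
  · rw [enth_of_ne_one hγ]
    refine ((hasDerivAt_rpow_const (p := γ - 1) (Or.inl hρ.ne')).const_mul _).congr_deriv ?_
    rw [sub_sub, one_add_one_eq_two, ← mul_assoc, div_mul_cancel₀ _ (sub_ne_zero.2 hγ)]

theorem deriv_deriv_enth (γ : ℝ) (hρ : 0 < ρ) :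
    deriv (deriv (enth γ)) ρ = γ * ((γ - 2) * ρ ^ (γ - 3)) := by
  have hderiv : deriv (enth γ) =ᶠ[𝓝 ρ] fun y => γ * y ^ (γ - 2) := by
    filter_upwards [Ioi_mem_nhds hρ] with y hy
    exact (hasDerivAt_enth γ hy).deriv
  rw [hderiv.deriv_eq, ((hasDerivAt_rpow_const (p := γ - 2) (Or.inl hρ.ne')).const_mul γ).deriv,
    sub_sub, show (2 : ℝ) + 1 = 3 by norm_num]

end Enthalpy

noncomputable def fluxSq (γ Rm ε : ℝ) : ℝ :=
  ((Rm - ε) * Rm) ^ 2 / (2 * Rm - ε) * (2 * dslope (enth γ) Rm (Rm - ε))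

section FluxSq

variable {γ Rm ε : ℝ}

theorem Aflux_eq_sqrt_fluxSq (hRm : 0 < Rm) (hε₀ : ε ≠ 0) (hε : ε ≤ Rm) :
    Aflux γ Rm ε = √(fluxSq γ Rm ε) := by
  have hslope : 2 * dslope (enth γ) Rm (Rm - ε) = 2 * (enth γ Rm - enth γ (Rm - ε)) / ε := by
    rw [dslope_of_ne _ (by simpa using hε₀), slope_def_field, sub_sub_cancel_left, div_neg,
      ← neg_div, neg_sub, mul_div_assoc]
  have hsq : ((Rm - ε) * Rm) ^ 2 / (2 * Rm - ε) = ((Rm - ε) * Rm / √(2 * Rm - ε)) ^ 2 := by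
    rw [div_pow, sq_sqrt (by linarith)]
  rw [fluxSq, hslope, hsq, sqrt_mul (sq_nonneg _), sqrt_sq (by have := sub_nonneg.2 hε; positivity),
    Aflux]

theorem analyticAt_fluxSq (hRm : 0 < Rm) : AnalyticAt ℝ (fluxSq γ Rm) 0 := by
  have hdslope : AnalyticAt ℝ (fun ε => dslope (enth γ) Rm (Rm - ε)) 0 :=
    (analyticAt_enth γ hRm).analyticAt_dslope.comp_of_eq (by fun_prop) (sub_zero Rm)
  unfold fluxSq
  fun_prop (disch := linarith)

theorem fluxSq_zero (hRm : 0 < Rm) : fluxSq γ Rm 0 = Rm ^ 2 * (γ * Rm ^ (γ - 1)) := by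
  rw [fluxSq, sub_zero, dslope_same, (hasDerivAt_enth γ hRm).deriv,
    show γ - 2 = γ - 1 - 1 by ring, rpow_sub_one hRm.ne']
  field_simp
  ring

theorem hasDerivAt_fluxSq (hRm : 0 < Rm) :
    HasDerivAt (fluxSq γ Rm) (-((γ + 1) / 2) * Rm * (γ * Rm ^ (γ - 1))) 0 := by
  have hd : HasDerivAt (dslope (enth γ) Rm) (γ * ((γ - 2) * Rm ^ (γ - 3)) / 2) (Rm - 0) := by
    rw [sub_zero, ← deriv_deriv_enth γ hRm, ← (analyticAt_enth γ hRm).deriv_dslope_same]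
    exact (analyticAt_enth γ hRm).analyticAt_dslope.differentiableAt.hasDerivAt
  have hsub : HasDerivAt (fun ε : ℝ => Rm - ε) (-1) 0 := (hasDerivAt_id 0).const_sub Rm
  have h := (((hsub.mul_const Rm).pow 2).div ((hasDerivAt_id 0).const_sub (2 * Rm))
    (by simp only [id, sub_zero]; positivity)).mul ((hd.comp 0 hsub).const_mul 2)
  refine HasDerivAt.congr_deriv (f := fluxSq γ Rm) h ?_
  have h₂ : Rm ^ (γ - 2) = Rm ^ (γ - 1) / Rm := by
    rw [← rpow_sub_one hRm.ne']; ring_nf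
  have h₃ : Rm ^ (γ - 3) = Rm ^ (γ - 1) / Rm ^ 2 := by
    rw [← rpow_natCast, ← rpow_sub hRm]; ring_nf
  simp only [Pi.div_apply, Pi.pow_apply, Function.comp_apply, id, sub_zero,
    dslope_same, (hasDerivAt_enth γ hRm).deriv, h₂, h₃]
  field_simp
  ring

end FluxSq

/-- Expansion of the mass flux:
`A(ε) = R⁻·c_s(R⁻) − ((γ+1)/4)·c_s(R⁻)·ε + O(ε²)` as `ε → 0⁺`. -/
theorem stmt12 (γ Rm : ℝ) (hγ : 1 ≤ γ) (hRm : 0 < Rm) :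
    (fun ε => Aflux γ Rm ε - Rm * soundSpeed γ Rm + (γ + 1) / 4 * soundSpeed γ Rm * ε)
      =O[nhdsWithin 0 (Set.Ioi 0)] (fun ε => ε ^ 2) := by
  set K := γ * Rm ^ (γ - 1)
  have hK : 0 < K := mul_pos (by linarith) (rpow_pos_of_pos hRm _)
  have hQ₀ : fluxSq γ Rm 0 = (Rm * √K) ^ 2 := by
    rw [fluxSq_zero hRm, mul_pow, sq_sqrt hK.le]
  have hA : AnalyticAt ℝ (fun ε => √(fluxSq γ Rm ε)) 0 :=
    (analyticAt_sqrt (by rw [hQ₀]; positivity)).comp_of_eq (analyticAt_fluxSq hRm) rfl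
  have hA' : deriv (fun ε => √(fluxSq γ Rm ε)) 0 = -((γ + 1) / 4 * √K) := by
    rw [((hasDerivAt_fluxSq hRm).sqrt (by rw [hQ₀]; positivity)).deriv, hQ₀,
      sqrt_sq (by positivity)]
    field_simp
    rw [sq_sqrt hK.le]
    ring
  refine (hA.analyticAt_dslope.differentiableAt.isBigO_sub_sub_smul_deriv.mono
    nhdsWithin_le_nhds).congr' ?_ (by simp)
  filter_upwards [Ioo_mem_nhdsGT hRm] with ε hε
  rw [Aflux_eq_sqrt_fluxSq hRm hε.1.ne' hε.2.le, hA', hQ₀, sqrt_sq (by positivity)]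
  simp only [sub_zero, smul_eq_mul, soundSpeed]
  ring
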